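/- ⟨f̃_{0,1}, f̃_{1,1}⟩ = 0 if and only if r_1 = (4 − 4α_1² − 6α_2 − 2α_1α_2 + 3α_1²α_2 − 4α_2² + 3α_2³)/(4(−4 + α_1² − α_1α_2 + α_2²)), and ⟨f̃_{1,1}, f̃_{2,1}⟩ = 0 if and only if s_1 = (4 − 6α_1 − 4α_1² + 3α_1³ − 2α_1α_2 − 4α_2² + 3α_1α_2²)/(4(−4 + α_1² − α_1α_2 + α_2²)). -/

import Mathlib

open Set

/-- `f` is the self-affine FIF on `[0,1]` (partition `0, 1/2, 1`, hidden AFIF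
component identically zero) with parameters `α₁, α₂` through the data
`(0, w₀), (1/2, w₁), (1, w₂)`. -/
def IsSAFIF2 (α₁ α₂ : ℝ) (f : ℝ → ℝ) (w₀ w₁ w₂ : ℝ) : Prop :=
  ContinuousOn f (Icc (0 : ℝ) 1) ∧
  (∃ c₁ d₁ c₂ d₂ : ℝ, ∀ u ∈ Icc (0 : ℝ) 1,
    f (u / 2) = α₁ * f u + (c₁ * u + d₁) ∧
    f ((u + 1) / 2) = α₂ * f u + (c₂ * u + d₂)) ∧
  f 0 = w₀ ∧ f (1 / 2) = w₁ ∧ f 1 = w₂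

/-!
Splitting `[0,1]` at `1/2` and using the functional equations, each of `∫ f`, `∫ u f` and
`∫ f g` (for two self-affine functions with the same scalings) becomes an affine expression in
itself and lower moments, with leading factors `(α₁ + α₂)/2`, `(α₁ + α₂)/4` and `(α₁² + α₂²)/2`
of modulus `< 1`; the first two are the case `g = 1`, `g = u` of the third, since constants and
the identity are self-affine for any scalings. The affine parts are pinned down by the
interpolation data, so eliminating the moments gives `K ⟨f̃₀, f̃₁⟩ = N - D r₁` with `K, D ≠ 0`.
The second equivalence is the first one for `u ↦ f̃(1 - u)`, which swaps `α₁` and `α₂`.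
-/

section

lemma eq_zero_iff_eq_div_of_mul_eq {K x N D r : ℝ} (hK : K ≠ 0) (hD : D ≠ 0)
    (h : K * x = N - D * r) : x = 0 ↔ r = N / D := by
  rw [eq_div_iff hD, ← mul_right_inj' hK, h, mul_zero, sub_eq_zero, mul_comm, eq_comm]

variable {α₁ α₂ c₁ d₁ c₂ d₂ : ℝ} {f g : ℝ → ℝ}

lemma integral_congr_unitInterval {φ ψ : ℝ → ℝ} (h : ∀ u ∈ Icc (0:ℝ) 1, φ u = ψ u) :
    ∫ u in (0:ℝ)..1, φ u = ∫ u in (0:ℝ)..1, ψ u :=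
  intervalIntegral.integral_congr fun u hu => h u (by rwa [uIcc_of_le zero_le_one] at hu)

lemma two_mul_integral_unitInterval {h : ℝ → ℝ} (hc : ContinuousOn h (Icc 0 1)) :
    2 * ∫ u in (0:ℝ)..1, h u =
      (∫ u in (0:ℝ)..1, h (u / 2)) + ∫ u in (0:ℝ)..1, h ((u + 1) / 2) := by
  have hl : IntervalIntegrable h MeasureTheory.volume 0 (1 / 2) :=
    (hc.mono (Icc_subset_Icc le_rfl (by norm_num))).intervalIntegrable_of_Icc (by norm_num)
  have hr : IntervalIntegrable h MeasureTheory.volume (1 / 2) 1 :=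
    (hc.mono (Icc_subset_Icc (by norm_num) le_rfl)).intervalIntegrable_of_Icc (by norm_num)
  simp only [add_div _ (1:ℝ) 2, intervalIntegral.integral_comp_div_add h two_ne_zero,
    intervalIntegral.integral_comp_div h two_ne_zero]
  rw [← intervalIntegral.integral_add_adjacent_intervals hl hr]
  norm_num
  ring

lemma integral_affine_mul_affine (hf : ContinuousOn f (Icc 0 1)) (hg : ContinuousOn g (Icc 0 1))
    (a c d b e e' : ℝ) :
    ∫ u in (0:ℝ)..1, (a * f u + (c * u + d)) * (b * g u + (e * u + e')) =
      a * b * (∫ u in (0:ℝ)..1, f u * g u)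
        + a * (e * (∫ u in (0:ℝ)..1, u * f u) + e' * ∫ u in (0:ℝ)..1, f u)
        + b * (c * (∫ u in (0:ℝ)..1, u * g u) + d * ∫ u in (0:ℝ)..1, g u)
        + (c * e / 3 + (c * e' + e * d) / 2 + d * e') := by
  rw [← uIcc_of_le zero_le_one] at hf hg
  have expand : ∀ u, (a * f u + (c * u + d)) * (b * g u + (e * u + e')) =
      a * b * (f u * g u) + a * e * (u * f u) + a * e' * f u + b * c * (u * g u) + b * d * g u
        + (u ^ 2 * (c * e) + u * (c * e' + e * d) + d * e') := fun u => by ring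
  simp_rw [expand]
  simp (disch := apply ContinuousOn.intervalIntegrable; fun_prop) only
    [intervalIntegral.integral_add, intervalIntegral.integral_const_mul,
      intervalIntegral.integral_mul_const, integral_pow, integral_id,
      intervalIntegral.integral_const]
  norm_num
  ring

def IsSelfAffine (α₁ α₂ c₁ d₁ c₂ d₂ : ℝ) (f : ℝ → ℝ) : Prop :=
  ∀ u ∈ Icc (0:ℝ) 1,
    f (u / 2) = α₁ * f u + (c₁ * u + d₁) ∧ f ((u + 1) / 2) = α₂ * f u + (c₂ * u + d₂)

lemma isSelfAffine_const_one (α₁ α₂ : ℝ) :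
    IsSelfAffine α₁ α₂ 0 (1 - α₁) 0 (1 - α₂) fun _ => 1 :=
  fun _ _ => ⟨by ring, by ring⟩

lemma isSelfAffine_id (α₁ α₂ : ℝ) :
    IsSelfAffine α₁ α₂ (1 / 2 - α₁) 0 (1 / 2 - α₂) (1 / 2) fun u => u :=
  fun _ _ => ⟨by ring, by ring⟩

lemma IsSAFIF2.isSelfAffine {w₀ w₁ w₂ : ℝ} (hf : IsSAFIF2 α₁ α₂ f w₀ w₁ w₂) :
    IsSelfAffine α₁ α₂ (w₁ - α₁ * w₂ - (1 - α₁) * w₀) ((1 - α₁) * w₀)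
      ((1 - α₂) * w₂ - w₁ + α₂ * w₀) (w₁ - α₂ * w₀) f := by
  obtain ⟨-, ⟨c₁, d₁, c₂, d₂, h⟩, h0, hhalf, h1⟩ := hf
  have h₀ := h 0 (by norm_num)
  have h₁ := h 1 (by norm_num)
  norm_num [h0, hhalf, h1] at h₀ h₁
  have hd₁ : d₁ = (1 - α₁) * w₀ := by linarith [h₀.1]
  have hc₁ : c₁ = w₁ - α₁ * w₂ - (1 - α₁) * w₀ := by linarith [h₁.1]
  have hd₂ : d₂ = w₁ - α₂ * w₀ := by linarith [h₀.2]
  have hc₂ : c₂ = (1 - α₂) * w₂ - w₁ + α₂ * w₀ := by linarith [h₁.2]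
  rwa [← hc₁, ← hd₁, ← hc₂, ← hd₂]

lemma IsSAFIF2.comp_one_sub {w₀ w₁ w₂ : ℝ} (hf : IsSAFIF2 α₁ α₂ f w₀ w₁ w₂) :
    IsSAFIF2 α₂ α₁ (fun u => f (1 - u)) w₂ w₁ w₀ := by
  obtain ⟨hc, ⟨c₁, d₁, c₂, d₂, h⟩, h0, hhalf, h1⟩ := hf
  have maps_to : MapsTo (fun u : ℝ => 1 - u) (Icc 0 1) (Icc 0 1) :=
    fun u hu => ⟨by linarith [hu.2], by linarith [hu.1]⟩
  refine ⟨hc.comp (by fun_prop) maps_to, ⟨-c₂, c₂ + d₂, -c₁, c₁ + d₁, fun u hu => ?_⟩,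
    by simpa, by norm_num [hhalf], by simpa⟩
  obtain ⟨hl, hr⟩ := h (1 - u) (maps_to hu)
  dsimp only
  constructor
  · rw [show 1 - u / 2 = (1 - u + 1) / 2 by ring, hr]; ring
  · rw [show 1 - (u + 1) / 2 = (1 - u) / 2 by ring, hl]; ring

namespace IsSelfAffine

variable {e₁ e₁' e₂ e₂' : ℝ}

theorem integral_mul_eq (hf : ContinuousOn f (Icc 0 1)) (hg : ContinuousOn g (Icc 0 1))
    (hfa : IsSelfAffine α₁ α₂ c₁ d₁ c₂ d₂ f) (hga : IsSelfAffine α₁ α₂ e₁ e₁' e₂ e₂' g) :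
    (2 - α₁ ^ 2 - α₂ ^ 2) * ∫ u in (0:ℝ)..1, f u * g u =
      α₁ * (e₁ * (∫ u in (0:ℝ)..1, u * f u) + e₁' * (∫ u in (0:ℝ)..1, f u)
          + c₁ * (∫ u in (0:ℝ)..1, u * g u) + d₁ * ∫ u in (0:ℝ)..1, g u)
        + α₂ * (e₂ * (∫ u in (0:ℝ)..1, u * f u) + e₂' * (∫ u in (0:ℝ)..1, f u)
          + c₂ * (∫ u in (0:ℝ)..1, u * g u) + d₂ * ∫ u in (0:ℝ)..1, g u)
        + (c₁ * e₁ / 3 + (c₁ * e₁' + e₁ * d₁) / 2 + d₁ * e₁')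
        + (c₂ * e₂ / 3 + (c₂ * e₂' + e₂ * d₂) / 2 + d₂ * e₂') := by
  have hs := two_mul_integral_unitInterval (h := fun u => f u * g u) (hf.mul hg)
  have hl : ∫ u in (0:ℝ)..1, f (u / 2) * g (u / 2) =
      ∫ u in (0:ℝ)..1, (α₁ * f u + (c₁ * u + d₁)) * (α₁ * g u + (e₁ * u + e₁')) :=
    integral_congr_unitInterval fun u hu => by rw [(hfa u hu).1, (hga u hu).1]
  have hr : ∫ u in (0:ℝ)..1, f ((u + 1) / 2) * g ((u + 1) / 2) =
      ∫ u in (0:ℝ)..1, (α₂ * f u + (c₂ * u + d₂)) * (α₂ * g u + (e₂ * u + e₂')) :=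
    integral_congr_unitInterval fun u hu => by rw [(hfa u hu).2, (hga u hu).2]
  rw [hl, hr, integral_affine_mul_affine hf hg, integral_affine_mul_affine hf hg] at hs
  linear_combination hs

theorem integral_eq (hf : ContinuousOn f (Icc 0 1)) (hfa : IsSelfAffine α₁ α₂ c₁ d₁ c₂ d₂ f) :
    (2 - α₁ - α₂) * ∫ u in (0:ℝ)..1, f u = c₁ / 2 + d₁ + c₂ / 2 + d₂ := by
  have h := hfa.integral_mul_eq hf continuousOn_const (isSelfAffine_const_one α₁ α₂)
  simp only [mul_one, intervalIntegral.integral_const, integral_id] at h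
  norm_num at h
  linear_combination h

theorem integral_mul_id_eq (hf : ContinuousOn f (Icc 0 1))
    (hfa : IsSelfAffine α₁ α₂ c₁ d₁ c₂ d₂ f) :
    (4 - α₁ - α₂) * ∫ u in (0:ℝ)..1, u * f u =
      α₂ * (∫ u in (0:ℝ)..1, f u) + (c₁ / 3 + d₁ / 2 + 5 * c₂ / 6 + 3 * d₂ / 2) := by
  have h := hfa.integral_mul_eq (g := fun u => u) hf continuousOn_id (isSelfAffine_id α₁ α₂)
  have hsq : ∫ u in (0:ℝ)..1, u * u = 1 / 3 := by norm_num [← sq]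
  simp only [mul_comm (f _), hsq, integral_id] at h
  norm_num at h
  linear_combination 2 * h

end IsSelfAffine

theorem IsSAFIF2.integral_mul_hat {r : ℝ} (hf : IsSAFIF2 α₁ α₂ f 1 r 0)
    (hg : IsSAFIF2 α₁ α₂ g 0 1 0) :
    3 * (2 - α₁ - α₂) * (4 - α₁ - α₂) * (2 - α₁ ^ 2 - α₂ ^ 2) * ∫ u in (0:ℝ)..1, f u * g u =
      (4 - 4 * α₁ ^ 2 - 6 * α₂ - 2 * α₁ * α₂ + 3 * α₁ ^ 2 * α₂ - 4 * α₂ ^ 2 + 3 * α₂ ^ 3)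
        - 4 * (-4 + α₁ ^ 2 - α₁ * α₂ + α₂ ^ 2) * r := by
  have hfa := hf.isSelfAffine
  have hga := hg.isSelfAffine
  have hfg := hfa.integral_mul_eq hf.1 hg.1 hga
  have hf₀ := hfa.integral_eq hf.1
  have hf₁ := hfa.integral_mul_id_eq hf.1
  have hg₀ := hga.integral_eq hg.1
  have hg₁ := hga.integral_mul_id_eq hg.1
  -- eliminate the moments `∫ f`, `∫ u f`, `∫ g`, `∫ u g` from `hfg`
  linear_combination (3 * (2 - α₁ - α₂) * (4 - α₁ - α₂)) * hfg
    + (3 * (2 - α₁ - α₂) * (α₁ - α₂)) * hf₁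
    + (3 * ((4 - α₁ - α₂) * α₂ + α₂ * (α₁ - α₂))) * hf₀
    + (3 * (2 - α₁ - α₂) * (α₁ * (r - 1 + α₁) + α₂ * (α₂ - r))) * hg₁
    + (3 * ((4 - α₁ - α₂) * (α₁ * (1 - α₁) + α₂ * (r - α₂))
        + α₂ * (α₁ * (r - 1 + α₁) + α₂ * (α₂ - r)))) * hg₀

theorem IsSAFIF2.integral_mul_hat_eq_zero_iff {r : ℝ} (hα₁ : |α₁| < 1) (hα₂ : |α₂| < 1)
    (hf : IsSAFIF2 α₁ α₂ f 1 r 0) (hg : IsSAFIF2 α₁ α₂ g 0 1 0) :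
    (∫ u in (0:ℝ)..1, f u * g u) = 0 ↔
      r = (4 - 4 * α₁ ^ 2 - 6 * α₂ - 2 * α₁ * α₂ + 3 * α₁ ^ 2 * α₂ - 4 * α₂ ^ 2 + 3 * α₂ ^ 3) /
        (4 * (-4 + α₁ ^ 2 - α₁ * α₂ + α₂ ^ 2)) := by
  obtain ⟨hα₁l, hα₁r⟩ := abs_lt.mp hα₁
  obtain ⟨hα₂l, hα₂r⟩ := abs_lt.mp hα₂
  have hK : 3 * (2 - α₁ - α₂) * (4 - α₁ - α₂) * (2 - α₁ ^ 2 - α₂ ^ 2) ≠ 0 := by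
    have : 0 < 2 - α₁ ^ 2 - α₂ ^ 2 := by nlinarith
    have : 0 < 2 - α₁ - α₂ := by linarith
    have : 0 < 4 - α₁ - α₂ := by linarith
    positivity
  have hD : 4 * (-4 + α₁ ^ 2 - α₁ * α₂ + α₂ ^ 2) ≠ 0 := by
    nlinarith [sq_nonneg (α₁ + α₂)]
  exact eq_zero_iff_eq_div_of_mul_eq hK hD (hf.integral_mul_hat hg)

end

theorem stmt16_general (α₁ α₂ r₁ s₁ : ℝ)
    (hα₁ : |α₁| < 1) (hα₂ : |α₂| < 1)
    (f0 f1 f2 : ℝ → ℝ)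
    (hf0 : IsSAFIF2 α₁ α₂ f0 1 r₁ 0)
    (hf1 : IsSAFIF2 α₁ α₂ f1 0 1 0)
    (hf2 : IsSAFIF2 α₁ α₂ f2 0 s₁ 1) :
    ((∫ u in (0:ℝ)..1, f0 u * f1 u) = 0 ↔
      r₁ = (4 - 4 * α₁ ^ 2 - 6 * α₂ - 2 * α₁ * α₂ + 3 * α₁ ^ 2 * α₂ -
              4 * α₂ ^ 2 + 3 * α₂ ^ 3) /
            (4 * (-4 + α₁ ^ 2 - α₁ * α₂ + α₂ ^ 2))) ∧
    ((∫ u in (0:ℝ)..1, f1 u * f2 u) = 0 ↔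
      s₁ = (4 - 6 * α₁ - 4 * α₁ ^ 2 + 3 * α₁ ^ 3 - 2 * α₁ * α₂ -
              4 * α₂ ^ 2 + 3 * α₁ * α₂ ^ 2) /
            (4 * (-4 + α₁ ^ 2 - α₁ * α₂ + α₂ ^ 2))) := by
  refine ⟨hf0.integral_mul_hat_eq_zero_iff hα₁ hα₂ hf1, ?_⟩
  have hreflect : ∫ u in (0:ℝ)..1, f1 u * f2 u = ∫ u in (0:ℝ)..1, f2 (1 - u) * f1 (1 - u) := by
    rw [intervalIntegral.integral_comp_sub_left (fun u => f2 u * f1 u)]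
    simp only [sub_self, sub_zero, mul_comm]
  rw [hreflect, hf2.comp_one_sub.integral_mul_hat_eq_zero_iff hα₂ hα₁ hf1.comp_one_sub]
  ring_nf

/-- `⟨f̃_{0,1}, f̃_{1,1}⟩ = 0` iff `r₁` equals the stated formula, and
`⟨f̃_{1,1}, f̃_{2,1}⟩ = 0` iff `s₁` equals the stated formula. -/
theorem stmt16 (α₁ α₂ β₁ β₂ γ₁ γ₂ r₁ s₁ : ℝ)
    (hα₁ : |α₁| < 1) (hα₂ : |α₂| < 1) (hγ₁ : |γ₁| < 1) (hγ₂ : |γ₂| < 1)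
    (hβγ₁ : |β₁| + |γ₁| < 1) (hβγ₂ : |β₂| + |γ₂| < 1)
    (f0 f1 f2 : ℝ → ℝ)
    (hf0 : IsSAFIF2 α₁ α₂ f0 1 r₁ 0)
    (hf1 : IsSAFIF2 α₁ α₂ f1 0 1 0)
    (hf2 : IsSAFIF2 α₁ α₂ f2 0 s₁ 1) :
    ((∫ u in (0:ℝ)..1, f0 u * f1 u) = 0 ↔
      r₁ = (4 - 4 * α₁ ^ 2 - 6 * α₂ - 2 * α₁ * α₂ + 3 * α₁ ^ 2 * α₂ -
              4 * α₂ ^ 2 + 3 * α₂ ^ 3) /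
            (4 * (-4 + α₁ ^ 2 - α₁ * α₂ + α₂ ^ 2))) ∧
    ((∫ u in (0:ℝ)..1, f1 u * f2 u) = 0 ↔
      s₁ = (4 - 6 * α₁ - 4 * α₁ ^ 2 + 3 * α₁ ^ 3 - 2 * α₁ * α₂ -
              4 * α₂ ^ 2 + 3 * α₁ * α₂ ^ 2) /
            (4 * (-4 + α₁ ^ 2 - α₁ * α₂ + α₂ ^ 2))) :=
  stmt16_general α₁ α₂ r₁ s₁ hα₁ hα₂ f0 f1 f2 hf0 hf1 hf2
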